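/- arXiv:2503.01885 — 4 statements merged into one kernel-verified Lean document; each statement's English description precedes it below -/
import Mathlib

section
/- Let G be a simple undirected graph on vertex set {1,…,n} and let ε > 0. Define points θ_1,…,θ_n ∈ ℝ^n by: the j-th coordinate of θ_i equals 0 if j = i, equals 1.5ε if j is adjacent to i in G, and equals 2.5ε otherwise. Then for any subset S ⊆ {1,…,n}, there exists a point θ ∈ ℝ^n with ‖θ − θ_i‖_∞ ≤ ε for every i ∈ S if and only if S is a clique of G. -/
open Classical

/-- The reduction from Maximum Clique: with points
`θ i` in `ℝ^n` (sup norm) whose `j`-th coordinate is `0` if `j = i`,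
`1.5ε` if `j` is adjacent to `i`, and `2.5ε` otherwise, a subset `S`
admits a common point within `ℓ∞`-distance `ε` of all `θ i`, `i ∈ S`,
iff `S` is a clique of `G`. -/
theorem stmt_0 {n : ℕ} (G : SimpleGraph (Fin n)) (ε : ℝ) (hε : 0 < ε)
    (θ : Fin n → Fin n → ℝ)
    (hθ : ∀ i j : Fin n,
      θ i j = if j = i then 0 else if G.Adj i j then 1.5 * ε else 2.5 * ε)
    (S : Set (Fin n)) :
    (∃ c : Fin n → ℝ, ∀ i ∈ S, ‖c - θ i‖ ≤ ε) ↔ G.IsClique S := by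
  constructor
  · rintro ⟨c, hc⟩ i hi j hj hij
    by_contra hadj
    have h1 : |c i - θ i i| ≤ ε := by
      have := (pi_norm_le_iff_of_nonneg hε.le).mp (hc i hi) i
      simpa [Real.norm_eq_abs] using this
    have h2 : |c i - θ j i| ≤ ε := by
      have := (pi_norm_le_iff_of_nonneg hε.le).mp (hc j hj) i
      simpa [Real.norm_eq_abs] using this
    have e1 : θ i i = 0 := by simp [hθ]
    have e2 : θ j i = 2.5 * ε := by
      have : ¬ G.Adj j i := fun h => hadj h.symm
      simp [hθ, hij, this]
    rw [e1] at h1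
    rw [e2] at h2
    rw [abs_le] at h1 h2
    linarith
  · intro hS
    refine ⟨fun j => if j ∈ S then ε else 2 * ε, fun i hi => ?_⟩
    rw [pi_norm_le_iff_of_nonneg hε.le]
    intro j
    simp only [Pi.sub_apply, Real.norm_eq_abs]
    by_cases hjS : j ∈ S
    · by_cases hji : j = i
      · subst hji
        simp [hθ, hjS, abs_of_nonneg hε.le]
      · have hadj : G.Adj i j := hS hi hjS (fun h => hji h.symm)
        rw [hθ, if_neg hji, if_pos hadj, if_pos hjS]
        rw [abs_le]; constructor <;> linarith
    · have hji : j ≠ i := fun h => hjS (h ▸ hi)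
      rw [hθ, if_neg hji, if_neg hjS]
      by_cases hadj : G.Adj i j
      · rw [if_pos hadj, abs_le]; constructor <;> linarith
      · rw [if_neg hadj, abs_le]; constructor <;> linarith
end

section
/- Let G be a simple undirected graph on vertex set {1,…,n} and let ε > 0. Define points θ_1,…,θ_n ∈ ℝ^n by: the j-th coordinate of θ_i equals 0 if j = i, equals 1.5ε if j is adjacent to i in G, and equals 2.5ε otherwise. Then the optimal value of Max-1-Cover on this instance, namely max over θ ∈ ℝ^n of the cardinality of {i ∈ {1,…,n} : ‖θ − θ_i‖_∞ ≤ ε}, equals the clique number ω(G) of G (the maximum size of a clique of G). -/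
open Classical

/-- The optimal value of Max-1-Cover on the reduction instance
equals the clique number of `G`. -/
theorem stmt_1 {n : ℕ} (G : SimpleGraph (Fin n)) (ε : ℝ) (hε : 0 < ε)
    (θ : Fin n → Fin n → ℝ)
    (hθ : ∀ i j : Fin n,
      θ i j = if j = i then 0 else if G.Adj i j then 1.5 * ε else 2.5 * ε) :
    sSup {m : ℕ | ∃ c : Fin n → ℝ, m = {i : Fin n | ‖c - θ i‖ ≤ ε}.ncard}
      = G.cliqueNum := by
  set A := {m : ℕ | ∃ c : Fin n → ℝ, m = {i : Fin n | ‖c - θ i‖ ≤ ε}.ncard} with hA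
  -- upper bound: every achievable m is ≤ cliqueNum
  have hub : ∀ m ∈ A, m ≤ G.cliqueNum := by
    rintro m ⟨c, rfl⟩
    set S := {i : Fin n | ‖c - θ i‖ ≤ ε} with hS
    have hfin : S.Finite := Set.toFinite _
    have hclique : G.IsClique hfin.toFinset := by
      intro i hi j hj hij
      simp only [Finset.mem_coe, Set.Finite.mem_toFinset, hS, Set.mem_setOf_eq] at hi hj
      have h1 : |(c - θ i) j| ≤ ε := le_trans (le_of_eq (Real.norm_eq_abs _).symm)
        (le_trans (norm_le_pi_norm (c - θ i) j) hi)
      have h2 : |(c - θ j) j| ≤ ε := le_trans (le_of_eq (Real.norm_eq_abs _).symm)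
        (le_trans (norm_le_pi_norm (c - θ j) j) hj)
      have hjj : θ j j = 0 := by rw [hθ]; simp
      by_contra hadj
      have hij' : θ i j = 2.5 * ε := by
        rw [hθ]; rw [if_neg (by exact fun h => hij (h ▸ rfl)), if_neg (fun h => hadj h)]
      simp only [Pi.sub_apply] at h1 h2
      rw [hjj, sub_zero] at h2
      have : |θ i j| ≤ 2 * ε := by
        calc |θ i j| = |c j - (c j - θ i j)| := by ring_nf
        _ ≤ |c j| + |c j - θ i j| := abs_sub _ _
        _ ≤ ε + ε := add_le_add h2 h1
        _ = 2 * ε := by ring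
      rw [hij', abs_of_nonneg (by positivity)] at this
      linarith
    calc S.ncard = hfin.toFinset.card := Set.ncard_eq_toFinset_card _ hfin
      _ ≤ G.cliqueNum := hclique.card_le_cliqueNum
  -- membership: cliqueNum is achievable
  have hmem : G.cliqueNum ∈ A := by
    obtain ⟨s, hs⟩ := G.exists_isNClique_cliqueNum
    refine ⟨fun j => if j ∈ s then ε else 2 * ε, ?_⟩
    have hset : {i : Fin n | ‖(fun j => if j ∈ s then ε else 2 * ε) - θ i‖ ≤ ε} = ↑s := by
      ext i
      simp only [Set.mem_setOf_eq, Finset.coe_sort_coe, Finset.mem_coe]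
      constructor
      · intro hi
        by_contra his
        have := le_trans (norm_le_pi_norm ((fun j => if j ∈ s then ε else 2 * ε) - θ i) i) hi
        simp only [Pi.sub_apply, if_neg his, hθ, if_pos, sub_zero, Real.norm_eq_abs,
          abs_of_nonneg (by positivity : (0:ℝ) ≤ 2 * ε)] at this
        linarith
      · intro his
        rw [pi_norm_le_iff_of_nonneg hε.le]
        intro j
        simp only [Pi.sub_apply, Real.norm_eq_abs]
        rw [hθ]
        by_cases hji : j = i
        · subst hji
          rw [if_pos rfl, if_pos his, sub_zero, abs_of_nonneg hε.le]
        · rw [if_neg hji]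
          by_cases hjs : j ∈ s
          · have hadj : G.Adj i j := hs.isClique his hjs (fun h => hji (h.symm))
            rw [if_pos hjs, if_pos hadj]
            rw [show ε - 1.5 * ε = -(0.5 * ε) by ring, abs_neg,
              abs_of_nonneg (by positivity)]
            linarith
          · rw [if_neg hjs]
            by_cases hadj : G.Adj i j
            · rw [if_pos hadj, show 2 * ε - 1.5 * ε = 0.5 * ε by ring,
                abs_of_nonneg (by positivity)]
              linarith
            · rw [if_neg hadj, show 2 * ε - 2.5 * ε = -(0.5 * ε) by ring, abs_neg,
                abs_of_nonneg (by positivity)]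
              linarith
    rw [hset]
    simp [Set.ncard_coe_finset, hs.card_eq]
  exact le_antisymm (csSup_le ⟨_, hmem⟩ hub)
    (le_csSup ⟨G.cliqueNum, hub⟩ hmem)
end

section
/- Let θ_1, …, θ_n ∈ ℝ^d, ε > 0, and K a positive integer. Suppose there exist θ'_1, …, θ'_K ∈ ℝ^d such that for every i ∈ {1,…,n} there is some k with ‖θ'_k − θ_i‖_∞ ≤ ε (i.e., a full cover of size K exists). Then for any tuple (θ̄_1, …, θ̄_K) of points of ℝ^d, the following are equivalent: (i) (θ̄_1, …, θ̄_K) maximizes the count objective Σ_{i=1}^n 1(min_{k∈[K]} ‖θ̄_k − θ_i‖_∞ ≤ ε), i.e., covers all n points; (ii) there exist weights p_{ik} ≥ 0 with Σ_{k=1}^K p_{ik} = 1 for every i such that the relaxed objective Σ_{i=1}^n ReLU(Σ_{k=1}^K p_{ik} ‖θ̄_k − θ_i‖_∞ − ε) equals 0, i.e., (θ̄_1, …, θ̄_K) together with these weights minimizes the relaxed objective. -/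
/-- Equivalence of the combinatorial coverage objective and its
differentiable relaxation when a full cover of size `K` exists (Theorem 4).
A tuple `c̄` covers all the points iff there are simplex weights `p` making
the relaxed objective `Σ_i ReLU(Σ_k p i k ‖c̄ k − θ i‖_∞ − ε)` equal to `0`. -/
theorem stmt_6 {d n : ℕ} (θ : Fin n → (Fin d → ℝ)) (ε : ℝ) (hε : 0 < ε)
    (K : ℕ) (hK : 0 < K)
    (hfull : ∃ c : Fin K → (Fin d → ℝ), ∀ i : Fin n, ∃ k : Fin K,
      ‖c k - θ i‖ ≤ ε)
    (cbar : Fin K → (Fin d → ℝ)) :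
    (∀ i : Fin n, ∃ k : Fin K, ‖cbar k - θ i‖ ≤ ε) ↔
      (∃ p : Fin n → Fin K → ℝ,
        (∀ i k, 0 ≤ p i k) ∧ (∀ i : Fin n, ∑ k : Fin K, p i k = 1) ∧
        ∑ i : Fin n,
          max (∑ k : Fin K, p i k * ‖cbar k - θ i‖ - ε) 0 = 0) := by
  constructor
  · intro h
    choose f hf using h
    refine ⟨fun i k => if k = f i then 1 else 0, ?_, ?_, ?_⟩
    · intro i k; dsimp only; split <;> norm_num
    · intro i; simp
    · apply Finset.sum_eq_zero
      intro i _
      have : ∑ k : Fin K, (if k = f i then (1:ℝ) else 0) * ‖cbar k - θ i‖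
          = ‖cbar (f i) - θ i‖ := by
        rw [Finset.sum_eq_single (f i)] <;> simp +contextual
      rw [this]
      simp [max_eq_right, sub_nonpos.mpr (hf i)]
  · rintro ⟨p, hp0, hp1, hsum⟩ i
    have hterm : ∀ j ∈ Finset.univ, (0:ℝ) ≤
        max (∑ k : Fin K, p j k * ‖cbar k - θ j‖ - ε) 0 := by
      intro j _; exact le_max_right _ _
    have hi := (Finset.sum_eq_zero_iff_of_nonneg hterm).mp hsum i (Finset.mem_univ i)
    have hle : ∑ k : Fin K, p i k * ‖cbar k - θ i‖ ≤ ε := by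
      by_contra h
      push_neg at h
      have := le_max_left (∑ k : Fin K, p i k * ‖cbar k - θ i‖ - ε) 0
      linarith [hi ▸ this]
    by_contra hc
    push_neg at hc
    have : ε * ∑ k : Fin K, p i k < ∑ k : Fin K, p i k * ‖cbar k - θ i‖ := by
      rw [Finset.mul_sum]
      obtain ⟨k0, hk0⟩ : ∃ k, 0 < p i k := by
        by_contra h
        push_neg at h
        have : ∑ k : Fin K, p i k = 0 :=
          Finset.sum_eq_zero fun k _ => le_antisymm (h k) (hp0 i k)
        rw [hp1 i] at this; linarith
      refine Finset.sum_lt_sum (fun k _ => ?_) ⟨k0, Finset.mem_univ k0, ?_⟩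
      · calc ε * p i k ≤ ‖cbar k - θ i‖ * p i k :=
              mul_le_mul_of_nonneg_right (le_of_lt (hc k)) (hp0 i k)
          _ = p i k * ‖cbar k - θ i‖ := mul_comm _ _
      · calc ε * p i k0 < ‖cbar k0 - θ i‖ * p i k0 :=
              mul_lt_mul_of_pos_right (hc k0) hk0
          _ = p i k0 * ‖cbar k0 - θ i‖ := mul_comm _ _
    rw [hp1 i, mul_one] at this
    linarith
end

section
/- Let Z be a measurable space, h a natural number, L ≥ 0, ε ≥ 0, and let r : ℝ^d × Z → ℝ be such that each r_θ = r(θ, ·) is bounded measurable and |r_θ(z) − r_{θ'}(z)| ≤ L ‖θ − θ'‖_∞ for all z ∈ Z and all θ, θ' ∈ ℝ^d. Let M be a nonempty set of probability measures on the trajectory space Z^{h+1}, and for θ ∈ ℝ^d and μ ∈ M define V_θ(μ) = ∫ Σ_{t=0}^h r_θ(z_t) dμ(z_0,…,z_h) (undiscounted, γ = 1). Suppose θ_i, θ_j ∈ ℝ^d satisfy ‖θ_i − θ_j‖_∞ ≤ ε, and suppose μ_i maximizes V_{θ_i} over M and μ_j maximizes V_{θ_j} over M. Then V_{θ_i}(μ_j)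 ≥ V_{θ_i}(μ_i) − 2L(h+1)ε. -/
open MeasureTheory

/-- Simulation-type lemma (Lemma 5), undiscounted case `γ = 1`.
If `‖θ_i − θ_j‖_∞ ≤ ε` and `μ_i`, `μ_j` are optimal trajectory distributions
for tasks `θ_i`, `θ_j`, then `V_{θ_i}(μ_j) ≥ V_{θ_i}(μ_i) − 2L(h+1)ε`. -/
theorem stmt_12 {Z : Type*} [MeasurableSpace Z] {d : ℕ} (h : ℕ)
    (L : ℝ) (hL : 0 ≤ L) (ε : ℝ) (hε : 0 ≤ ε)
    (r : (Fin d → ℝ) → Z → ℝ)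
    (hrm : ∀ θ : Fin d → ℝ, Measurable (r θ))
    (hrb : ∀ θ : Fin d → ℝ, ∃ C : ℝ, ∀ z : Z, |r θ z| ≤ C)
    (hrL : ∀ θ θ' : Fin d → ℝ, ∀ z : Z, |r θ z - r θ' z| ≤ L * ‖θ - θ'‖)
    (M : Set (Measure (Fin (h + 1) → Z))) (hM : M.Nonempty)
    (hMprob : ∀ μ ∈ M, IsProbabilityMeasure μ)
    (V : (Fin d → ℝ) → Measure (Fin (h + 1) → Z) → ℝ)
    (hV : ∀ (θ : Fin d → ℝ) (μ : Measure (Fin (h + 1) → Z)),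
      V θ μ = ∫ z, ∑ t : Fin (h + 1), r θ (z t) ∂μ)
    (θi θj : Fin d → ℝ) (hθ : ‖θi - θj‖ ≤ ε)
    (μi μj : Measure (Fin (h + 1) → Z)) (hμi : μi ∈ M) (hμj : μj ∈ M)
    (hopti : ∀ μ ∈ M, V θi μ ≤ V θi μi)
    (hoptj : ∀ μ ∈ M, V θj μ ≤ V θj μj) :
    V θi μi - 2 * L * (h + 1 : ℝ) * ε ≤ V θi μj := by
  have hmeas : ∀ (θ : Fin d → ℝ),
      Measurable fun z : Fin (h + 1) → Z => ∑ t : Fin (h + 1), r θ (z t) := by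
    intro θ
    exact Finset.measurable_sum _ fun t _ => (hrm θ).comp (measurable_pi_apply t)
  have hint : ∀ (θ : Fin d → ℝ) (μ : Measure (Fin (h + 1) → Z)),
      IsProbabilityMeasure μ →
      Integrable (fun z : Fin (h + 1) → Z => ∑ t : Fin (h + 1), r θ (z t)) μ := by
    intro θ μ hp
    obtain ⟨C, hC⟩ := hrb θ
    refine Integrable.mono' (integrable_const ((h + 1 : ℝ) * C))
      (hmeas θ).aestronglyMeasurable (Filter.Eventually.of_forall fun z => ?_)
    calc ‖∑ t : Fin (h + 1), r θ (z t)‖ ≤ ∑ t : Fin (h + 1), ‖r θ (z t)‖ :=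
          norm_sum_le _ _
      _ ≤ ∑ t : Fin (h + 1), C := Finset.sum_le_sum fun t _ => hC (z t)
      _ = (h + 1 : ℝ) * C := by simp [Finset.sum_const]
  have key : ∀ μ ∈ M, |V θi μ - V θj μ| ≤ L * (h + 1 : ℝ) * ε := by
    intro μ hμ
    haveI := hMprob μ hμ
    have hi := hint θi μ (hMprob μ hμ)
    have hj := hint θj μ (hMprob μ hμ)
    rw [hV, hV, ← integral_sub hi hj]
    calc |∫ z, ((∑ t : Fin (h + 1), r θi (z t)) - ∑ t : Fin (h + 1), r θj (z t)) ∂μ|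
        ≤ ∫ z, |(∑ t : Fin (h + 1), r θi (z t)) - ∑ t : Fin (h + 1), r θj (z t)| ∂μ :=
          by simpa [Real.norm_eq_abs] using
            norm_integral_le_integral_norm (μ := μ)
              (fun z : Fin (h + 1) → Z =>
                (∑ t : Fin (h + 1), r θi (z t)) - ∑ t : Fin (h + 1), r θj (z t))
      _ ≤ ∫ _z, L * (h + 1 : ℝ) * ε ∂μ := by
          refine integral_mono (hi.sub hj).abs (integrable_const _) fun z => ?_
          calc |(∑ t : Fin (h + 1), r θi (z t)) - ∑ t : Fin (h + 1), r θj (z t)|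
              = |∑ t : Fin (h + 1), (r θi (z t) - r θj (z t))| := by
                rw [Finset.sum_sub_distrib]
            _ ≤ ∑ t : Fin (h + 1), |r θi (z t) - r θj (z t)| :=
                Finset.abs_sum_le_sum_abs _ _
            _ ≤ ∑ t : Fin (h + 1), L * ε := by
                refine Finset.sum_le_sum fun t _ => ?_
                exact (hrL θi θj (z t)).trans (by nlinarith)
            _ = L * (h + 1 : ℝ) * ε := by simp [Finset.sum_const]; ring
      _ = L * (h + 1 : ℝ) * ε := by simp
  have h1 := key μi hμi
  have h2 := key μj hμj
  have h3 := hoptj μi hμi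
  rw [abs_le] at h1 h2
  linarith [h1.1, h1.2, h2.1, h2.2]
end
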